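/- Define the slow plus greater-than-one continued fraction map on real numbers x > 1 by T(x) = x − 1 if x > 2, and T(x) = 1/(x−1) if 1 < x < 2. Then a real quadratic irrational λ > 1 is purely periodic under T (i.e. T^n(λ) = λ for some n ≥ 1) if and only if λ is standard, meaning λ > 1 > 0 > λ', where λ' is the Galois conjugate of λ. -/

import Mathlib

/-!
Along the orbit of a quadratic irrational `x`, its conjugate `x'` is moved by the same branch,
`y ↦ y - 1` or `y ↦ 1/(y - 1)`, that `slowCF` applies to `x`, and a negative conjugate stays
negative. If `x` is periodic and `x' > 0`, then `x'` can never drop below `1` (afterwards it would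
stay negative), so `|x - x'|` never shrinks and grows at every inversion, which a period must
contain. Conversely, standard numbers of a fixed discriminant `b² - 4ac` have bounded integer
coefficients `a, b, c`, since `ac < 0`; they form a finite set that `slowCF` maps injectively into
itself, so each of them is periodic.
-/

/-- The slow plus greater-than-one continued fraction map:
`T(x) = x − 1` if `x > 2`, and `T(x) = 1/(x−1)` otherwise (i.e. for `1 < x < 2`). -/
noncomputable def slowCF (x : ℝ) : ℝ := if 2 < x then x - 1 else 1 / (x - 1)

open Function Set

lemma Function.IsPeriodicPt.mem_of_iterate_mem {α : Type*} {f : α → α} {s : Set α} {n k : ℕ}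
    {x : α} (hx : IsPeriodicPt f n x) (hn : 0 < n) (hs : MapsTo f s s) (hk : f^[k] x ∈ s) :
    x ∈ s := by
  rw [← (hx.const_mul k).eq, ← Nat.sub_add_cancel (Nat.le_mul_of_pos_right k hn),
    iterate_add_apply]
  exact hs.iterate _ hk

lemma Set.InjOn.mem_periodicPts {α : Type*} {f : α → α} {s : Set α} (hinj : InjOn f s)
    (hf : MapsTo f s s) (hs : s.Finite) {x : α} (hx : x ∈ s) : x ∈ periodicPts f := by
  have := hs.to_subtype
  obtain ⟨n, hn, hper⟩ :=
    Function.mem_periodicPts.1 ((hf.restrict_inj.2 hinj).mem_periodicPts ⟨x, hx⟩)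
  refine mk_mem_periodicPts hn ?_
  rw [IsPeriodicPt, IsFixedPt, ← hf.coe_iterate_restrict ⟨x, hx⟩, hper.eq]

lemma abs_sub_lt_abs_inv_sub_inv {u v : ℝ} (hu0 : 0 < u) (hu1 : u < 1) (hv0 : 0 < v)
    (hv1 : v < 1) (huv : u ≠ v) : |u - v| < |u⁻¹ - v⁻¹| := by
  have huv' : 0 < |v - u| := abs_pos.2 (sub_ne_zero.2 huv.symm)
  have hprod : u * v < 1 := by nlinarith
  have hinv : u⁻¹ - v⁻¹ = (v - u) / (u * v) := by field_simp
  rw [hinv, abs_div, abs_sub_comm, abs_of_pos (mul_pos hu0 hv0), lt_div_iff₀ (mul_pos hu0 hv0)]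
  nlinarith

noncomputable def slowBranch (x y : ℝ) : ℝ := if 2 < x then y - 1 else (y - 1)⁻¹

lemma slowCF_eq_slowBranch (x : ℝ) : slowCF x = slowBranch x x := by
  rw [slowCF, slowBranch, one_div]

lemma slowBranch_injective (x : ℝ) : Injective (slowBranch x) := by
  intro y z h
  unfold slowBranch at h
  split_ifs at h
  · linarith
  · linarith [inv_injective h]

lemma slowBranch_neg {x y : ℝ} (hy : y < 1) : slowBranch x y < 0 := by
  unfold slowBranch
  split_ifs
  · linarith
  · exact inv_lt_zero.2 (by linarith)

lemma slowBranch_lt_neg_one_iff {x y : ℝ} (hy : y < 0) : slowBranch x y < -1 ↔ 2 < x := by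
  unfold slowBranch
  split_ifs with hx
  · simpa [hx] using (by linarith : y - 1 < -1)
  · simp only [hx, iff_false, not_lt]
    rw [le_inv_of_neg (by norm_num) (by linarith)]
    linarith

lemma one_lt_slowCF {x : ℝ} (h1 : 1 < x) (h2 : x ≠ 2) : 1 < slowCF x := by
  rw [slowCF]
  split_ifs with hx
  · linarith
  · rw [one_div, one_lt_inv₀ (by linarith)]
    linarith [lt_of_le_of_ne (not_lt.1 hx) h2]

structure IntQuad where
  a : ℤ
  b : ℤ
  c : ℤ

namespace IntQuad

variable (q : IntQuad)

def eval (x : ℝ) : ℝ := q.a * x ^ 2 + q.b * x + q.c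

def disc : ℤ := q.b ^ 2 - 4 * q.a * q.c

structure IsIrrRoot (x : ℝ) : Prop where
  a_ne_zero : q.a ≠ 0
  eval_eq_zero : q.eval x = 0
  irrational : Irrational x

/-- The quadratic whose roots are those of `q` minus one. -/
def shift : IntQuad := ⟨q.a, 2 * q.a + q.b, q.a + q.b + q.c⟩

/-- The quadratic whose roots are `(x - 1)⁻¹` for the roots `x` of `q`. -/
def invShift : IntQuad := ⟨q.a + q.b + q.c, 2 * q.a + q.b, q.a⟩

noncomputable def slowStep (x : ℝ) : IntQuad := if 2 < x then q.shift else q.invShift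

lemma disc_shift : q.shift.disc = q.disc := by simp only [disc, shift]; ring

lemma disc_invShift : q.invShift.disc = q.disc := by simp only [disc, invShift]; ring

lemma disc_slowStep (x : ℝ) : (q.slowStep x).disc = q.disc := by
  rw [slowStep]
  split_ifs
  exacts [q.disc_shift, q.disc_invShift]

variable {q} {r : IntQuad} {x : ℝ}

lemma IsIrrRoot.div_eq (hq : q.IsIrrRoot x) (hr : r.IsIrrRoot x) :
    (q.b : ℝ) / q.a = r.b / r.a := by
  obtain ⟨hqa, hqx, hx⟩ := hq
  obtain ⟨hra, hrx, -⟩ := hr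
  have hqa' : (q.a : ℝ) ≠ 0 := by exact_mod_cast hqa
  have hra' : (r.a : ℝ) ≠ 0 := by exact_mod_cast hra
  have hm : r.a * q.b - q.a * r.b = 0 := by
    by_contra hm
    refine ((hx.intCast_mul hm).add_intCast (r.a * q.c - q.a * r.c)).ne_zero ?_
    unfold eval at hqx hrx
    push_cast
    linear_combination (r.a : ℝ) * hqx - (q.a : ℝ) * hrx
  have hm' : (r.a : ℝ) * q.b - q.a * r.b = 0 := by exact_mod_cast hm
  rw [div_eq_div_iff hqa' hra']
  linear_combination hm'

lemma mem_Icc_disc_of_mul_neg (h : q.a * q.c < 0) :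
    q.a ∈ Icc (-q.disc) q.disc ∧ q.b ∈ Icc (-q.disc) q.disc ∧
      q.c ∈ Icc (-q.disc) q.disc := by
  have ha : |q.a| ≤ -(q.a * q.c) := by
    rw [← abs_of_neg h, abs_mul]
    exact le_mul_of_one_le_right (abs_nonneg _) (Int.one_le_abs (right_ne_zero_of_mul h.ne))
  have hc : |q.c| ≤ -(q.a * q.c) := by
    rw [← abs_of_neg h, abs_mul]
    exact le_mul_of_one_le_left (abs_nonneg _) (Int.one_le_abs (left_ne_zero_of_mul h.ne))
  have hb := Int.le_self_sq q.b
  have hb' := Int.le_self_sq (-q.b)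
  rw [abs_le] at ha hc
  rw [neg_sq] at hb'
  simp only [mem_Icc, disc]
  refine ⟨⟨?_, ?_⟩, ⟨?_, ?_⟩, ⟨?_, ?_⟩⟩ <;> linarith

end IntQuad

open Classical in
/-- The Galois conjugate of a real quadratic irrational (and junk value `0` for other reals). -/
noncomputable def quadConj (x : ℝ) : ℝ :=
  if h : ∃ q : IntQuad, q.IsIrrRoot x then -(h.choose.b : ℝ) / h.choose.a - x else 0

namespace IntQuad.IsIrrRoot

variable {q : IntQuad} {x y : ℝ} (h : q.IsIrrRoot x)
include h

lemma quadConj_eq : quadConj x = -(q.b : ℝ) / q.a - x := by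
  have hex : ∃ q : IntQuad, q.IsIrrRoot x := ⟨q, h⟩
  rw [quadConj, dif_pos hex, neg_div, neg_div, hex.choose_spec.div_eq h]

lemma irrational_quadConj : Irrational (quadConj x) := by
  rw [h.quadConj_eq]
  exact_mod_cast h.irrational.ratCast_sub (-q.b / q.a : ℚ)

lemma quadConj_ne_self : quadConj x ≠ x := by
  intro hx
  have hqa : (q.a : ℝ) ≠ 0 := by exact_mod_cast h.a_ne_zero
  have h2a : 2 * q.a ≠ 0 := mul_ne_zero two_ne_zero h.a_ne_zero
  refine ((h.irrational.intCast_mul h2a).add_intCast q.b).ne_zero ?_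
  rw [h.quadConj_eq] at hx
  field_simp at hx
  push_cast
  linear_combination -hx

lemma a_mul_mul_quadConj : q.a * (x * quadConj x) = q.c := by
  have hqa : (q.a : ℝ) ≠ 0 := by exact_mod_cast h.a_ne_zero
  have hx := h.eval_eq_zero
  unfold eval at hx
  rw [h.quadConj_eq]
  field_simp
  linear_combination -hx

lemma a_mul_c_neg (hx : 0 < x) (hconj : quadConj x < 0) : q.a * q.c < 0 := by
  have hsq : (0 : ℝ) < q.a * q.a := mul_self_pos.2 (by exact_mod_cast h.a_ne_zero)
  have hac : (q.a : ℝ) * q.c < 0 := by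
    rw [← h.a_mul_mul_quadConj, ← mul_assoc]
    exact mul_neg_of_pos_of_neg hsq (mul_neg_of_pos_of_neg hx hconj)
  exact_mod_cast hac

lemma eq_quadConj (hy : q.eval y = 0) (hyx : y ≠ x) : y = quadConj x := by
  have hqa : (q.a : ℝ) ≠ 0 := by exact_mod_cast h.a_ne_zero
  have hx := h.eval_eq_zero
  unfold eval at hx hy
  have hfac : (x - y) * ((q.a : ℝ) * (x + y) + q.b) = 0 := by linear_combination hx - hy
  have hsum := (mul_eq_zero.1 hfac).resolve_left (sub_ne_zero.2 hyx.symm)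
  rw [h.quadConj_eq]
  field_simp
  linear_combination hsum

lemma eval_one_ne_zero : q.eval 1 ≠ 0 := fun h1 ↦
  h.irrational_quadConj.ne_one (h.eq_quadConj h1 h.irrational.ne_one.symm).symm

lemma shift : q.shift.IsIrrRoot (x - 1) := by
  refine ⟨h.a_ne_zero, ?_, by exact_mod_cast h.irrational.sub_intCast 1⟩
  have hx := h.eval_eq_zero
  simp only [eval, IntQuad.shift] at hx ⊢
  push_cast
  linear_combination hx

lemma invShift : q.invShift.IsIrrRoot (x - 1)⁻¹ := by
  have hx1 : x - 1 ≠ 0 := sub_ne_zero.2 h.irrational.ne_one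
  refine ⟨?_, ?_, by exact_mod_cast (h.irrational.sub_intCast 1).inv⟩
  · have h1 := h.eval_one_ne_zero
    simp only [eval, IntQuad.invShift] at h1 ⊢
    exact_mod_cast (by simpa using h1 : ((q.a + q.b + q.c : ℤ) : ℝ) ≠ 0)
  · have hx := h.eval_eq_zero
    simp only [eval, IntQuad.invShift] at hx ⊢
    push_cast
    field_simp
    linear_combination hx

lemma slowStep : (q.slowStep x).IsIrrRoot (slowCF x) := by
  rw [IntQuad.slowStep, slowCF, one_div]
  split_ifs
  exacts [h.shift, h.invShift]

lemma quadConj_sub_one : quadConj (x - 1) = quadConj x - 1 := by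
  have hqa : (q.a : ℝ) ≠ 0 := by exact_mod_cast h.a_ne_zero
  rw [h.shift.quadConj_eq, h.quadConj_eq]
  simp only [IntQuad.shift]
  push_cast
  field_simp
  ring

lemma quadConj_inv_sub_one : quadConj (x - 1)⁻¹ = (quadConj x - 1)⁻¹ := by
  have hqa : (q.a : ℝ) ≠ 0 := by exact_mod_cast h.a_ne_zero
  have hx1 : x - 1 ≠ 0 := sub_ne_zero.2 h.irrational.ne_one
  have hs : (q.a : ℝ) + q.b + q.c ≠ 0 := by simpa [eval] using h.eval_one_ne_zero
  have hc1 : quadConj x - 1 ≠ 0 := sub_ne_zero.2 h.irrational_quadConj.ne_one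
  have hx := h.eval_eq_zero
  unfold eval at hx
  rw [h.invShift.quadConj_eq]
  rw [h.quadConj_eq] at hc1 ⊢
  simp only [IntQuad.invShift]
  push_cast
  field_simp
  have hc1' : -(q.b : ℝ) - q.a * x - q.a ≠ 0 := by
    contrapose! hc1
    field_simp
    linear_combination hc1
  rw [eq_div_iff hc1']
  linear_combination (2 * (q.a : ℝ) + q.b) * hx

lemma quadConj_slowCF : quadConj (slowCF x) = slowBranch x (quadConj x) := by
  rw [slowCF, slowBranch, one_div]
  split_ifs
  exacts [h.quadConj_sub_one, h.quadConj_inv_sub_one]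

end IntQuad.IsIrrRoot

def quadIrrGtOne (D : ℤ) : Set ℝ :=
  {x | 1 < x ∧ ∃ q : IntQuad, q.disc = D ∧ q.IsIrrRoot x}

lemma mapsTo_slowCF_quadIrrGtOne (D : ℤ) :
    MapsTo slowCF (quadIrrGtOne D) (quadIrrGtOne D) := by
  rintro x ⟨hx, q, rfl, hq⟩
  exact ⟨one_lt_slowCF hx (hq.irrational.ne_nat 2), _, q.disc_slowStep x, hq.slowStep⟩

noncomputable def slowPair (p : ℝ × ℝ) : ℝ × ℝ := (slowCF p.1, slowBranch p.1 p.2)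

lemma slowPair_iterate_fst (p : ℝ × ℝ) (k : ℕ) : (slowPair^[k] p).1 = slowCF^[k] p.1 := by
  induction k with
  | zero => rfl
  | succ k ih => rw [iterate_succ_apply', iterate_succ_apply', ← ih]; rfl

lemma slowPair_iterate_quadConj {D : ℤ} {x : ℝ} (hx : x ∈ quadIrrGtOne D) (k : ℕ) :
    slowPair^[k] (x, quadConj x) = (slowCF^[k] x, quadConj (slowCF^[k] x)) := by
  induction k with
  | zero => rfl
  | succ k ih =>
    obtain ⟨-, q, -, hq⟩ := (mapsTo_slowCF_quadIrrGtOne D).iterate k hx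
    rw [iterate_succ_apply', ih, iterate_succ_apply', slowPair, hq.quadConj_slowCF]

lemma dist_slowPair_of_two_lt {p : ℝ × ℝ} (h : 2 < p.1) :
    dist (slowPair p).1 (slowPair p).2 = dist p.1 p.2 := by
  simp only [slowPair, slowCF_eq_slowBranch, slowBranch, if_pos h, dist_sub_right]

lemma dist_lt_dist_slowPair {p : ℝ × ℝ} (h : ¬ 2 < p.1) (h1 : 1 < p.1) (h2 : 1 < p.2)
    (h1' : 1 < (slowPair p).1) (h2' : 1 < (slowPair p).2) (hne : p.1 ≠ p.2) :
    dist p.1 p.2 < dist (slowPair p).1 (slowPair p).2 := by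
  simp only [slowPair, slowCF_eq_slowBranch, slowBranch, if_neg h] at h1' h2' ⊢
  have hu : 0 < p.1 - 1 := by linarith
  have hv : 0 < p.2 - 1 := by linarith
  rw [Real.dist_eq, Real.dist_eq, ← sub_sub_sub_cancel_right p.1 p.2 1]
  exact abs_sub_lt_abs_inv_sub_inv hu ((one_lt_inv₀ hu).1 h1') hv ((one_lt_inv₀ hv).1 h2')
    (by contrapose! hne; linarith)

lemma dist_le_dist_slowPair {p : ℝ × ℝ} (h1 : 1 < p.1) (h2 : 1 < p.2)
    (h1' : 1 < (slowPair p).1) (h2' : 1 < (slowPair p).2) :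
    dist p.1 p.2 ≤ dist (slowPair p).1 (slowPair p).2 := by
  by_cases h : 2 < p.1
  · exact (dist_slowPair_of_two_lt h).ge
  by_cases hne : p.1 = p.2
  · simp [hne]
  exact (dist_lt_dist_slowPair h h1 h2 h1' h2' hne).le

lemma exists_not_two_lt_of_isPeriodicPt {x : ℝ} {n : ℕ} (hn : 0 < n)
    (hx : IsPeriodicPt slowCF n x) : ∃ k < n, ¬ 2 < slowCF^[k] x := by
  by_contra! h
  have hsub : ∀ k ≤ n, slowCF^[k] x = x - k := by
    intro k hk
    induction k with
    | zero => simp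
    | succ k ih =>
      rw [iterate_succ_apply', slowCF, if_pos (h k (by omega)), ih (by omega)]
      push_cast
      ring
  have hn' : (n : ℝ) = 0 := by linarith [hsub n le_rfl, hx.eq]
  exact hn.ne' (by exact_mod_cast hn')

/-- While both coordinates stay above `1`, `dist x y` never shrinks and grows at each inversion,
and a period contains an inversion; so `y` must drop below `1` somewhere on the orbit, after which
it is negative forever. -/
lemma snd_neg_of_isPeriodicPt_slowPair {p : ℝ × ℝ} {n : ℕ} (hn : 0 < n)
    (hp : IsPeriodicPt slowPair n p)
    (hP : ∀ k, 1 < (slowPair^[k] p).1 ∧ (slowPair^[k] p).1 ≠ (slowPair^[k] p).2) :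
    p.2 < 0 := by
  by_contra hp0
  have hnonneg : ∀ k, ¬ (slowPair^[k] p).2 < 0 := fun k hk ↦
    hp0 (hp.mem_of_iterate_mem (s := {q : ℝ × ℝ | q.2 < 0}) hn
      (fun q hq ↦ slowBranch_neg (by linarith [hq.out])) hk)
  have hge : ∀ k, 1 ≤ (slowPair^[k] p).2 := fun k ↦ not_lt.1 fun hk ↦
    hnonneg (k + 1) (by rw [iterate_succ_apply']; exact slowBranch_neg hk)
  have hgt : ∀ k, 1 < (slowPair^[k] p).2 := fun k ↦ (hge k).lt_of_ne' fun hk ↦ by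
    have h := hge (k + 1)
    rw [iterate_succ_apply', slowPair, hk] at h
    norm_num [slowBranch] at h
  have hstep (k : ℕ) :
      1 < (slowPair (slowPair^[k] p)).1 ∧ 1 < (slowPair (slowPair^[k] p)).2 := by
    rw [← iterate_succ_apply' slowPair]
    exact ⟨(hP (k + 1)).1, hgt (k + 1)⟩
  have hmono : Monotone fun k ↦ dist (slowPair^[k] p).1 (slowPair^[k] p).2 :=
    monotone_nat_of_le_succ fun k ↦ by
      simp only [iterate_succ_apply']
      exact dist_le_dist_slowPair (hP k).1 (hgt k) (hstep k).1 (hstep k).2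
  obtain ⟨k, hkn, hk⟩ := exists_not_two_lt_of_isPeriodicPt hn
    (by simpa [IsPeriodicPt, IsFixedPt, slowPair_iterate_fst] using congrArg Prod.fst hp.eq)
  rw [← slowPair_iterate_fst] at hk
  have hlt := dist_lt_dist_slowPair hk (hP k).1 (hgt k) (hstep k).1 (hstep k).2 (hP k).2
  rw [← iterate_succ_apply' slowPair] at hlt
  have hle := hmono (Nat.succ_le_of_lt hkn)
  have h0 := hmono (Nat.zero_le k)
  simp only [hp.eq, iterate_zero_apply] at hle h0
  linarith

lemma quadConj_neg_of_isPeriodicPt {D : ℤ} {x : ℝ} {n : ℕ} (hx : x ∈ quadIrrGtOne D)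
    (hn : 0 < n) (hper : IsPeriodicPt slowCF n x) : quadConj x < 0 := by
  refine snd_neg_of_isPeriodicPt_slowPair (p := (x, quadConj x)) hn ?_ fun k ↦ ?_
  · rw [IsPeriodicPt, IsFixedPt, slowPair_iterate_quadConj hx, hper.eq]
  · obtain ⟨h1, q, -, hq⟩ := (mapsTo_slowCF_quadIrrGtOne D).iterate k hx
    rw [slowPair_iterate_quadConj hx]
    exact ⟨h1, hq.quadConj_ne_self.symm⟩

def stdQuadIrr (D : ℤ) : Set ℝ := {x ∈ quadIrrGtOne D | quadConj x < 0}

lemma mapsTo_slowCF_stdQuadIrr (D : ℤ) : MapsTo slowCF (stdQuadIrr D) (stdQuadIrr D) := by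
  rintro x ⟨hx, hconj⟩
  obtain ⟨-, q, -, hq⟩ := id hx
  refine ⟨mapsTo_slowCF_quadIrrGtOne D hx, ?_⟩
  rw [hq.quadConj_slowCF]
  exact slowBranch_neg (by linarith)

/-- The conjugate of `slowCF x` is `< -1` after a subtraction and in `(-1, 0)` after an
inversion, so it determines the branch taken at a standard `x`. -/
lemma injOn_slowCF_stdQuadIrr (D : ℤ) : InjOn slowCF (stdQuadIrr D) := by
  rintro x ⟨⟨-, q, -, hq⟩, hx⟩ y ⟨⟨-, r, -, hr⟩, hy⟩ hxy
  have hbranch : 2 < x ↔ 2 < y := by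
    rw [← slowBranch_lt_neg_one_iff hx, ← slowBranch_lt_neg_one_iff hy, ← hq.quadConj_slowCF,
      ← hr.quadConj_slowCF, hxy]
  have hsame : slowBranch x = slowBranch y := by
    funext z
    simp only [slowBranch, hbranch]
  apply slowBranch_injective x
  rw [← slowCF_eq_slowBranch, hxy, slowCF_eq_slowBranch, hsame]

lemma subsingleton_stdQuadIrr_inter_roots (D : ℤ) (q : IntQuad) :
    {x ∈ stdQuadIrr D | q.IsIrrRoot x}.Subsingleton := by
  rintro x ⟨⟨-, hconj⟩, hq⟩ y ⟨⟨⟨hy, -⟩, -⟩, hqy⟩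
  by_contra hxy
  linarith [hq.eq_quadConj hqy.eval_eq_zero (Ne.symm hxy)]

lemma finite_stdQuadIrr (D : ℤ) : (stdQuadIrr D).Finite := by
  have hbox :
      {q : IntQuad | q.a ∈ Icc (-D) D ∧ q.b ∈ Icc (-D) D ∧ q.c ∈ Icc (-D) D}.Finite :=
    ((finite_Icc _ _).prod ((finite_Icc _ _).prod (finite_Icc _ _))).preimage
      (f := fun q : IntQuad ↦ (q.a, q.b, q.c)) (by rintro ⟨⟩ - ⟨⟩ - h; simp_all)
  refine (hbox.biUnion fun q _ ↦ (subsingleton_stdQuadIrr_inter_roots D q).finite).subset ?_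
  intro x hx
  obtain ⟨⟨h1, q, rfl, hq⟩, hconj⟩ := id hx
  exact mem_biUnion (IntQuad.mem_Icc_disc_of_mul_neg (hq.a_mul_c_neg (by linarith) hconj))
    ⟨hx, hq⟩

theorem stmt_9 (lam : ℝ) (hirr : Irrational lam)
    (a b c : ℤ) (ha : a ≠ 0)
    (hroot : (a : ℝ) * lam ^ 2 + (b : ℝ) * lam + (c : ℝ) = 0)
    (hlam : 1 < lam) :
    (∃ n : ℕ, 0 < n ∧ slowCF^[n] lam = lam) ↔
      (1 < lam ∧ -(b : ℝ) / (a : ℝ) - lam < 0) := by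
  have hq : IntQuad.IsIrrRoot ⟨a, b, c⟩ lam := ⟨ha, hroot, hirr⟩
  have hmem : lam ∈ quadIrrGtOne (IntQuad.disc ⟨a, b, c⟩) := ⟨hlam, _, rfl, hq⟩
  rw [← hq.quadConj_eq]
  constructor
  · rintro ⟨n, hn, hper⟩
    exact ⟨hlam, quadConj_neg_of_isPeriodicPt hmem hn hper⟩
  · rintro ⟨-, hconj⟩
    obtain ⟨n, hn, hper⟩ := mem_periodicPts.1 <| (injOn_slowCF_stdQuadIrr _).mem_periodicPts
      (mapsTo_slowCF_stdQuadIrr _) (finite_stdQuadIrr _) ⟨hmem, hconj⟩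
    exact ⟨n, hn, hper⟩
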